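/- arXiv:2504.20374 — 3 statements merged into one kernel-verified Lean document; each statement's English description precedes it below -/
import Mathlib

section
/- Let z < -4/27 be real, let x > 0 be the real root of 1 + t + z t^3 and y = r e^{iθ} (r > 0, θ ∈ (0,π)) its non-real upper-half-plane root. Then θ ∈ (2π/3, π), r = (1 - 4cos²θ)/(2cos θ), and x = 4cos²θ - 1. -/
/-!
Write `y = r e^{iθ}`. Since `sin 3θ = sin θ (4cos²θ - 1)`, the imaginary part of
`z y³ + y + 1 = 0` divided by `r sin θ` is `z r² (4cos²θ - 1) = -1`, and then the real part
reduces to `2 z r³ cos θ = 1`. As `z < 0`, these force `cos θ < 0` and `4cos²θ > 1`, i.e.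
`θ > 2π/3`, and their quotient gives `r`. Finally the three roots `x, y, ȳ` of the cubic sum
to zero, so `x = -2 r cos θ = 4cos²θ - 1`.
-/

open Complex Real ComplexConjugate

theorem sum_eq_zero_of_roots_of_depressed_cubic {K : Type*} [Field K] {z p q a b c : K}
    (hz : z ≠ 0) (hab : a ≠ b) (hac : a ≠ c) (hbc : b ≠ c)
    (ha : z * a ^ 3 + p * a + q = 0) (hb : z * b ^ 3 + p * b + q = 0)
    (hc : z * c ^ 3 + p * c + q = 0) :
    a + b + c = 0 := by
  have hab' : z * (a ^ 2 + a * b + b ^ 2) + p = 0 := by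
    refine (mul_eq_zero.mp ?_).resolve_left (sub_ne_zero.mpr hab)
    linear_combination ha - hb
  have hac' : z * (a ^ 2 + a * c + c ^ 2) + p = 0 := by
    refine (mul_eq_zero.mp ?_).resolve_left (sub_ne_zero.mpr hac)
    linear_combination ha - hc
  have : z * (b - c) * (a + b + c) = 0 := by linear_combination hab' - hac'
  exact (mul_eq_zero.mp this).resolve_left (mul_ne_zero hz (sub_ne_zero.mpr hbc))

theorem polar_cube (r θ : ℝ) :
    ((r : ℂ) * exp (θ * I)) ^ 3 = (r ^ 3 : ℝ) * exp ((3 * θ : ℝ) * I) := by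
  rw [mul_pow, ← Complex.exp_nat_mul]
  push_cast
  ring_nf

theorem polar_root_relations {z r θ : ℝ} (hr : r ≠ 0) (hsin : Real.sin θ ≠ 0)
    (hy : (z : ℂ) * (r * exp (θ * I)) ^ 3 + r * exp (θ * I) + 1 = 0) :
    z * r ^ 2 * (4 * Real.cos θ ^ 2 - 1) = -1 ∧ 2 * z * r ^ 3 * Real.cos θ = 1 := by
  rw [polar_cube] at hy
  have hre := congrArg re hy
  have him := congrArg im hy
  simp only [add_re, add_im, re_ofReal_mul, im_ofReal_mul, exp_ofReal_mul_I_re,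
    exp_ofReal_mul_I_im, one_re, one_im, zero_re, zero_im] at hre him
  rw [Real.cos_three_mul] at hre
  rw [Real.sin_three_mul] at him
  have hmod : z * r ^ 2 * (4 * Real.cos θ ^ 2 - 1) = -1 := by
    have : r * Real.sin θ * (z * r ^ 2 * (4 * Real.cos θ ^ 2 - 1) + 1) = 0 := by
      linear_combination him + 4 * z * r ^ 3 * Real.sin θ * Real.sin_sq_add_cos_sq θ
    linear_combination (mul_eq_zero.mp this).resolve_left (mul_ne_zero hr hsin)
  exact ⟨hmod, by linear_combination -hre + r * Real.cos θ * hmod⟩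

theorem real_root_eq_neg_two_mul_re {z x : ℝ} {y : ℂ} (hz : z ≠ 0) (hy0 : y.im ≠ 0)
    (hx : z * x ^ 3 + x + 1 = 0) (hy : (z : ℂ) * y ^ 3 + y + 1 = 0) :
    x = -(2 * y.re) := by
  have hxC : (z : ℂ) * (x : ℂ) ^ 3 + 1 * x + 1 = 0 := by
    rw [one_mul]
    exact_mod_cast hx
  have hconj : (z : ℂ) * conj y ^ 3 + 1 * conj y + 1 = 0 := by
    simpa using congrArg conj hy
  have hsum := sum_eq_zero_of_roots_of_depressed_cubic (ofReal_ne_zero.mpr hz)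
    (fun h => hy0 (by simpa using (congrArg im h).symm))
    (fun h => hy0 (by simpa using (congrArg im h).symm))
    (fun h => hy0 (by linarith [congrArg im h, conj_im y]))
    hxC (by linear_combination hy) hconj
  have hsum_re := congrArg re hsum
  simp only [add_re, ofReal_re, conj_re, zero_re] at hsum_re
  linarith

theorem two_pi_div_three_lt_of_cos_lt_neg_half {θ : ℝ} (hθ : 0 ≤ θ)
    (hcos : Real.cos θ < -(1 / 2)) :
    2 * π / 3 < θ := by
  have hcos_two_pi_div_three : Real.cos (2 * π / 3) = -(1 / 2) := by
    rw [show 2 * π / 3 = π - π / 3 by ring, Real.cos_pi_sub, Real.cos_pi_div_three]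
  by_contra! h
  have := Real.cos_le_cos_of_nonneg_of_le_pi hθ (by linarith [Real.pi_pos]) h
  linarith

theorem roots_data_general (z x r θ : ℝ) (hz : z < -4 / 27)
    (hx : z * x ^ 3 + x + 1 = 0) (hr : 0 < r) (hθ : θ ∈ Set.Ioo 0 π)
    (hy : (z : ℂ) * (r * Complex.exp (θ * Complex.I)) ^ 3
        + r * Complex.exp (θ * Complex.I) + 1 = 0) :
    θ ∈ Set.Ioo (2 * π / 3) π ∧
      r = (1 - 4 * Real.cos θ ^ 2) / (2 * Real.cos θ) ∧
      x = 4 * Real.cos θ ^ 2 - 1 := by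
  obtain ⟨hθ0, hθπ⟩ := hθ
  have hz0 : z < 0 := by linarith
  have hsin : 0 < Real.sin θ := Real.sin_pos_of_pos_of_lt_pi hθ0 hθπ
  obtain ⟨hmod, harg⟩ := polar_root_relations hr.ne' hsin.ne' hy
  have hcos_neg : Real.cos θ < 0 :=
    neg_of_mul_pos_right (harg.symm ▸ one_pos) (by nlinarith [pow_pos hr 3])
  have hcos_sq : 0 < 4 * Real.cos θ ^ 2 - 1 :=
    pos_of_mul_neg_right (hmod.symm ▸ neg_one_lt_zero) (by nlinarith [pow_pos hr 2])
  have hcos : Real.cos θ < -(1 / 2) := by nlinarith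
  have hx_re : x = -(2 * (r * Real.cos θ)) := by
    have hy_im : ((r : ℂ) * exp (θ * I)).im ≠ 0 := by
      rw [im_ofReal_mul, exp_ofReal_mul_I_im]
      positivity
    simpa [re_ofReal_mul, exp_ofReal_mul_I_re] using
      real_root_eq_neg_two_mul_re hz0.ne hy_im hx hy
  have hrcos : 2 * r * Real.cos θ = 1 - 4 * Real.cos θ ^ 2 := by
    linear_combination (2 * r * Real.cos θ) * hmod - (4 * Real.cos θ ^ 2 - 1) * harg
  refine ⟨⟨two_pi_div_three_lt_of_cos_lt_neg_half hθ0.le hcos, hθπ⟩, ?_, by linarith⟩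
  rw [eq_div_iff (by linarith : 2 * Real.cos θ < 0).ne]
  linear_combination hrcos

/-- with `x > 0` the real root and `y = r e^{iθ}` the upper half-plane
root of `1 + t + z t³` for `z < -4/27`, one has `θ ∈ (2π/3, π)`,
`r = (1 - 4cos²θ)/(2cos θ)` and `x = 4cos²θ - 1`. -/
theorem roots_data (z x r θ : ℝ) (hz : z < -4 / 27) (hxpos : 0 < x)
    (hx : z * x ^ 3 + x + 1 = 0) (hr : 0 < r) (hθ : θ ∈ Set.Ioo 0 π)
    (hy : (z : ℂ) * (r * Complex.exp (θ * Complex.I)) ^ 3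
        + r * Complex.exp (θ * Complex.I) + 1 = 0) :
    θ ∈ Set.Ioo (2 * π / 3) π ∧
      r = (1 - 4 * Real.cos θ ^ 2) / (2 * Real.cos θ) ∧
      x = 4 * Real.cos θ ^ 2 - 1 :=
  roots_data_general z x r θ hz hx hr hθ hy
end

section
/- Let z < -4/27 be real and let θ ∈ (2π/3, π) be the argument of the non-real root of 1 + t + z t^3 in the upper half-plane. Then z = 4cos²θ / (1 - 4cos²θ)^3. -/
/-!
Write the upper root as `w = a + b i` with `b ≠ 0`. The imaginary part of `z w³ + w + 1 = 0`,
divided by `b`, gives `z (3a² - b²) = -1`; subtracting `a` times it from the real part gives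
`2 z a (a² + b²) = 1`. In polar coordinates `a = r cos θ`, `b = r sin θ` these read
`z r² (4cos²θ - 1) = -1` and `2 z r³ cos θ = 1`; their quotient is `r = (1 - 4cos²θ)/(2cos θ)`,
and substituting back gives `z`.
-/

open Complex Real

theorem Complex.cubic_root_im_relation {z : ℝ} {w : ℂ} (hw : w.im ≠ 0)
    (h : (z : ℂ) * w ^ 3 + w + 1 = 0) : z * (3 * w.re ^ 2 - w.im ^ 2) = -1 := by
  have him := congrArg Complex.im h
  simp only [add_im, mul_im, mul_re, ofReal_re, ofReal_im, pow_succ, pow_zero, one_mul, one_im,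
    zero_im] at him
  apply mul_left_cancel₀ hw
  linear_combination him

theorem Complex.cubic_root_re_relation {z : ℝ} {w : ℂ} (hw : w.im ≠ 0)
    (h : (z : ℂ) * w ^ 3 + w + 1 = 0) : 2 * z * w.re * (w.re ^ 2 + w.im ^ 2) = 1 := by
  have hre := congrArg Complex.re h
  simp only [add_re, mul_im, mul_re, ofReal_re, ofReal_im, pow_succ, pow_zero, one_mul, one_re,
    zero_re] at hre
  linear_combination w.re * cubic_root_im_relation hw h - hre

theorem eq_div_of_polar_cubic_relations {z r c : ℝ} (him : z * r ^ 2 * (4 * c ^ 2 - 1) = -1)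
    (hre : 2 * z * c * r ^ 3 = 1) : z = 4 * c ^ 2 / (1 - 4 * c ^ 2) ^ 3 := by
  have hzr : z * r ^ 2 ≠ 0 := left_ne_zero_of_mul (by rw [him]; norm_num)
  have hr : 2 * c * r = 1 - 4 * c ^ 2 :=
    mul_left_cancel₀ hzr (by linear_combination hre + him)
  have hd : 1 - 4 * c ^ 2 ≠ 0 := by rintro h; simp [show 4 * c ^ 2 - 1 = 0 by linarith] at him
  rw [eq_div_iff (pow_ne_zero 3 hd)]
  linear_combination 4 * c ^ 2 * hre
    - z * ((1 - 4 * c ^ 2) ^ 2 + (1 - 4 * c ^ 2) * (2 * c * r) + (2 * c * r) ^ 2) * hr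

theorem z_in_terms_of_theta_general (z r θ : ℝ)
    (hθ : θ ∈ Set.Ioo (2 * π / 3) π)
    (hy : (z : ℂ) * (r * Complex.exp (θ * Complex.I)) ^ 3
        + r * Complex.exp (θ * Complex.I) + 1 = 0) :
    z = 4 * Real.cos θ ^ 2 / (1 - 4 * Real.cos θ ^ 2) ^ 3 := by
  have hre : (r * exp (θ * I)).re = r * Real.cos θ := by
    rw [re_ofReal_mul, exp_ofReal_mul_I_re]
  have him : (r * exp (θ * I)).im = r * Real.sin θ := by
    rw [im_ofReal_mul, exp_ofReal_mul_I_im]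
  have hr : r ≠ 0 := by rintro rfl; simp at hy
  have hsin : Real.sin θ ≠ 0 :=
    (sin_pos_of_pos_of_lt_pi (by linarith [hθ.1, pi_pos]) hθ.2).ne'
  have hw : (r * exp (θ * I)).im ≠ 0 := him ▸ mul_ne_zero hr hsin
  have h₁ := cubic_root_im_relation hw hy
  have h₂ := cubic_root_re_relation hw hy
  rw [hre, him] at h₁ h₂
  apply eq_div_of_polar_cubic_relations (r := r)
  · linear_combination h₁ + z * r ^ 2 * Real.sin_sq_add_cos_sq θ
  · linear_combination h₂ - 2 * z * r ^ 3 * Real.cos θ * Real.sin_sq_add_cos_sq θ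

/-- for `z < -4/27` with upper half-plane root `r e^{iθ}`,
`θ ∈ (2π/3, π)`, one has `z = 4cos²θ/(1 - 4cos²θ)³`. -/
theorem z_in_terms_of_theta (z r θ : ℝ) (hz : z < -4 / 27) (hr : 0 < r)
    (hθ : θ ∈ Set.Ioo (2 * π / 3) π)
    (hy : (z : ℂ) * (r * Complex.exp (θ * Complex.I)) ^ 3
        + r * Complex.exp (θ * Complex.I) + 1 = 0) :
    z = 4 * Real.cos θ ^ 2 / (1 - 4 * Real.cos θ ^ 2) ^ 3 :=
  z_in_terms_of_theta_general z r θ hθ hy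
end

section
/- Let r > 0 and θ ∈ (2π/3, π), and set x = -2r cos θ. If t ∈ ℂ is such that t² + x t + r² is a negative real number, then Re(t) = r cos θ and |t| > r; consequently t = r e^{iθ} + i s or t = r e^{-iθ} - i s for some s > 0. -/
open Complex Real

/-- with `x = -2r cos θ`, if `t² + x t + r²` is a negative real
number then `Re t = r cos θ`, `|t| > r`, and `t` lies on one of the two
vertical rays from `r e^{±iθ}`. -/
theorem quadratic_negative_real_characterization (r θ x : ℝ) (hr : 0 < r)
    (hθ : θ ∈ Set.Ioo (2 * π / 3) π) (hx : x = -2 * r * Real.cos θ) (t : ℂ)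
    (h : ∃ c : ℝ, c < 0 ∧ t ^ 2 + x * t + r ^ 2 = (c : ℂ)) :
    t.re = r * Real.cos θ ∧ r < ‖t‖ ∧
      ∃ s : ℝ, 0 < s ∧
        (t = r * Complex.exp (θ * Complex.I) + Complex.I * s ∨
          t = r * Complex.exp (-θ * Complex.I) - Complex.I * s) := by
  obtain ⟨c, hc, heq⟩ := h
  have hθ1 : 0 < θ := lt_trans (by positivity) hθ.1
  have hsin : 0 < Real.sin θ := Real.sin_pos_of_pos_of_lt_pi hθ1 hθ.2
  set a := t.re with ha
  set b := t.im with hb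
  rw [Complex.ext_iff] at heq
  simp only [Complex.add_re, Complex.add_im, Complex.mul_re, Complex.mul_im,
    Complex.ofReal_re, Complex.ofReal_im, pow_two, Complex.ofReal_re] at heq
  obtain ⟨hre, him⟩ := heq
  simp only [← ha, ← hb] at hre him
  have hsc : Real.sin θ ^ 2 + Real.cos θ ^ 2 = 1 := Real.sin_sq_add_cos_sq θ
  rw [hx] at hre him
  have hb0 : b ≠ 0 := by
    intro h0
    rw [h0] at hre
    nlinarith [sq_nonneg (a - r * Real.cos θ), sq_nonneg (r * Real.sin θ), mul_pos hr hsin]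
  have haval : a = r * Real.cos θ := by
    have : b * (2 * a + -2 * r * Real.cos θ) = 0 := by linear_combination him
    rcases mul_eq_zero.1 this with h' | h'
    · exact absurd h' hb0
    · linarith
  have hbsq : r ^ 2 * Real.sin θ ^ 2 < b ^ 2 := by
    nlinarith [hre]
  refine ⟨haval, ?_, ?_⟩
  · rw [← Real.sqrt_sq hr.le, Complex.norm_def, Complex.normSq_apply, ← ha, ← hb]
    apply Real.sqrt_lt_sqrt (by positivity)
    have haa : a * a = r ^ 2 * Real.cos θ ^ 2 := by rw [haval]; ring
    nlinarith [hbsq, hsc, haa]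
  · have hexp1 : Complex.exp (θ * Complex.I) = Complex.ofReal (Real.cos θ) + Complex.ofReal (Real.sin θ) * Complex.I := by
      rw [Complex.exp_mul_I, ← Complex.ofReal_cos, ← Complex.ofReal_sin]
    have hexp2 : Complex.exp (-θ * Complex.I) = Complex.ofReal (Real.cos θ) - Complex.ofReal (Real.sin θ) * Complex.I := by
      have : (-(θ : ℂ)) * Complex.I = ((-θ : ℝ) : ℂ) * Complex.I := by push_cast; ring
      rw [show -(θ : ℂ) * Complex.I = ((-θ : ℝ) : ℂ) * Complex.I by push_cast; ring,
        Complex.exp_mul_I, ← Complex.ofReal_cos, ← Complex.ofReal_sin]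
      rw [Real.cos_neg, Real.sin_neg]
      push_cast
      ring
    rcases lt_or_gt_of_ne hb0 with hblt | hbgt
    · refine ⟨-b - r * Real.sin θ, ?_, Or.inr ?_⟩
      · nlinarith
      · rw [hexp2]
        apply Complex.ext <;> simp only [Complex.add_re, Complex.add_im, Complex.sub_re, Complex.sub_im, Complex.mul_re, Complex.mul_im, Complex.I_re, Complex.I_im, Complex.ofReal_re, Complex.ofReal_im] <;> linarith [haval, ha, hb]
    · refine ⟨b - r * Real.sin θ, ?_, Or.inl ?_⟩
      · nlinarith
      · rw [hexp1]
        apply Complex.ext <;> simp only [Complex.add_re, Complex.add_im, Complex.sub_re, Complex.sub_im, Complex.mul_re, Complex.mul_im, Complex.I_re, Complex.I_im, Complex.ofReal_re, Complex.ofReal_im] <;> linarith [haval, ha, hb]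
end
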